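/- arXiv:2312.00974 — 3 statements merged into one kernel-verified Lean document; each statement's English description precedes it below -/
import Mathlib

section
/- Let r ≥ 1 be an integer, A_r = (a_1,…,a_r) ∈ ℤ_{>0}^r, N_r = (n_1,…,n_r) ∈ ℤ_{≥0}^r, x ∈ ℤ_{≥0}, s ∈ ℤ_{>0}, and let c ∈ ℂ be purely imaginary with e^{a_l c} ≠ 1 for every l. Then ∑_{M_r=0_r}^{N_r} (A_r·M_r + x)^s e^{c(A_r·M_r)} = (1/2^r) ∑_{S ⊆ {1,…,r}} (−1)^{|S|} e^{c(A_S·(N_S+1_{|S|}))} E_s(A_S·(N_S+1_{|S|}) + x, c; A_r). -/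
open scoped BigOperators

/-- The exponential power series `exp (w z) = ∑ wⁿ zⁿ / n!` in `ℂ⟦z⟧`. -/
noncomputable def expS (w : ℂ) : PowerSeries ℂ :=
  PowerSeries.mk fun n => w ^ n / n.factorial

/-- `E : ℕ → ℂ → ℂ` is the family of generalized Euler polynomials attached to the vector
`a` and the constant `c`, i.e. it satisfies the generating-function identity
`2^r · exp(xz) = (∏ l, (1 − e^{a_l c} · exp(a_l z))) · ∑_m E_m(x,c;A_r) z^m/m!` in `ℂ⟦z⟧`. -/
def IsGenEulerPoly {ι : Type} [Fintype ι] (a : ι → ℕ) (c : ℂ) (E : ℕ → ℂ → ℂ) : Prop :=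
  ∀ x : ℂ,
    PowerSeries.C ((2 : ℂ) ^ Fintype.card ι) * expS x =
      (∏ l : ι, (1 - PowerSeries.C (Complex.exp ((a l : ℂ) * c)) * expS (a l))) *
        PowerSeries.mk (fun m => E m x / m.factorial)

lemma expS_eq (w : ℂ) : expS w = PowerSeries.rescale w (PowerSeries.exp ℂ) := by
  ext n
  simp [expS, PowerSeries.coeff_rescale, PowerSeries.coeff_exp, div_eq_mul_inv]

lemma expS_add (u v : ℂ) : expS (u + v) = expS u * expS v := by
  rw [expS_eq, expS_eq, expS_eq, PowerSeries.exp_mul_exp_eq_exp_add]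

lemma expS_zero : expS 0 = 1 := by
  ext n
  simp [expS, PowerSeries.coeff_one]
  rcases n with _|n <;> simp

lemma expS_pow (u : ℂ) (n : ℕ) : expS u ^ n = expS (n * u) := by
  induction n with
  | zero => simp [expS_zero]
  | succ k ih =>
    rw [pow_succ, ih, ← expS_add]; congr 1; push_cast; ring

lemma expS_sum {ι : Type*} (S : Finset ι) (f : ι → ℂ) :
    expS (∑ i ∈ S, f i) = ∏ i ∈ S, expS (f i) := by
  classical
  induction S using Finset.induction_on with
  | empty => simp [expS_zero]
  | insert _ _ h ih => rw [Finset.sum_insert h, Finset.prod_insert h, expS_add, ih]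

lemma geomPS (t : PowerSeries ℂ) (n : ℕ) :
    (1 - t) * ∑ m ∈ Finset.range (n + 1), t ^ m = 1 - t ^ (n + 1) := by
  have := geom_sum_mul t (n + 1)
  linear_combination -this

lemma coeff_expS (w : ℂ) (s : ℕ) :
    PowerSeries.coeff s (expS w) = w ^ s / s.factorial := by
  simp [expS]

lemma constCoeff_expS (w : ℂ) : PowerSeries.constantCoeff (expS w) = 1 := by
  simp [expS, ← PowerSeries.coeff_zero_eq_constantCoeff]

lemma prod_one_sub {n : ℕ} (u : Fin n → PowerSeries ℂ) :
    ∏ i, (1 - u i) = ∑ T : Finset (Fin n), (-1 : PowerSeries ℂ) ^ T.card * ∏ i ∈ T, u i := by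
  classical
  have h : ∀ i : Fin n, (1 : PowerSeries ℂ) - u i = -u i + 1 := fun i => by ring
  simp_rw [h]
  rw [Finset.prod_add, ← Finset.powerset_univ]
  refine Finset.sum_congr rfl fun T _ => ?_
  have hneg : ∀ i : Fin n, -u i = (-1 : PowerSeries ℂ) * u i := fun i => by ring
  rw [Finset.prod_congr rfl fun i _ => hneg i, Finset.prod_mul_distrib, Finset.prod_const]
  simp

/-- Theorem 1 (general form): for purely imaginary `c` with `e^{a_l c} ≠ 1`,
`∑_{M_r=0_r}^{N_r} (A_r·M_r + x)^s e^{c(A_r·M_r)}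
  = 2^{-r} ∑_{S ⊆ {1,…,r}} (−1)^{|S|} e^{c(A_S·(N_S+1_{|S|}))} E_s(A_S·(N_S+1_{|S|})+x, c; A_r)`. -/
theorem statement0 (r : ℕ) (hr : 1 ≤ r) (a : Fin r → ℕ) (ha : ∀ l, 0 < a l)
    (N : Fin r → ℕ) (x : ℕ) (s : ℕ) (hs : 0 < s)
    (c : ℂ) (hc : c.re = 0) (hc1 : ∀ l, Complex.exp ((a l : ℂ) * c) ≠ 1)
    (E : ℕ → ℂ → ℂ) (hE : IsGenEulerPoly a c E) :
    (∑ M : (i : Fin r) → Fin (N i + 1),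
        (((∑ i, a i * (M i : ℕ) : ℕ) : ℂ) + (x : ℂ)) ^ s *
          Complex.exp (c * ((∑ i, a i * (M i : ℕ) : ℕ) : ℂ))) =
      (1 / 2 ^ r : ℂ) *
        ∑ S : Finset (Fin r),
          (-1 : ℂ) ^ S.card *
            Complex.exp (c * ((∑ i ∈ S, a i * (N i + 1) : ℕ) : ℂ)) *
            E s (((∑ i ∈ S, a i * (N i + 1) : ℕ) : ℂ) + (x : ℂ)) := by
  classical
  set t : Fin r → PowerSeries ℂ :=
    fun i => PowerSeries.C (Complex.exp ((a i : ℂ) * c)) * expS (a i) with ht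
  set P : PowerSeries ℂ := ∏ l, (1 - t l) with hP
  -- the weight attached to a multi-index / subset
  set w : ((i : Fin r) → Fin (N i + 1)) → ℂ :=
    fun M => ((∑ i, a i * (M i : ℕ) : ℕ) : ℂ) with hw
  set v : Finset (Fin r) → ℂ :=
    fun S => ((∑ i ∈ S, a i * (N i + 1) : ℕ) : ℂ) with hv
  -- the two power series
  set F : PowerSeries ℂ :=
    ∑ M : (i : Fin r) → Fin (N i + 1),
      PowerSeries.C (Complex.exp (c * w M)) * expS (w M + x) with hF
  set G : PowerSeries ℂ :=
    ∑ S : Finset (Fin r),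
      PowerSeries.C ((-1 : ℂ) ^ S.card * Complex.exp (c * v S)) *
        PowerSeries.mk (fun m => E m (v S + x) / m.factorial) with hG
  -- per-multi-index factorization
  have term_eq : ∀ M : (i : Fin r) → Fin (N i + 1),
      PowerSeries.C (Complex.exp (c * w M)) * expS (w M) = ∏ i, t i ^ (M i : ℕ) := by
    intro M
    have h1 : Complex.exp (c * w M) = ∏ i, Complex.exp ((a i : ℂ) * c) ^ (M i : ℕ) := by
      simp_rw [← Complex.exp_nat_mul, ← Complex.exp_sum]
      congr 1
      rw [hw]
      push_cast
      rw [Finset.mul_sum]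
      exact Finset.sum_congr rfl fun i _ => by ring
    have h2 : expS (w M) = ∏ i, expS (a i) ^ (M i : ℕ) := by
      have hwM : w M = ∑ i : Fin r, ((M i : ℕ) : ℂ) * ((a i : ℕ) : ℂ) := by
        rw [hw]; push_cast
        exact Finset.sum_congr rfl fun i _ => by ring
      rw [hwM, expS_sum]
      exact Finset.prod_congr rfl fun i _ => (expS_pow _ _).symm
    rw [h1, h2, map_prod, ← Finset.prod_mul_distrib]
    exact Finset.prod_congr rfl fun i _ => by rw [ht, mul_pow, map_pow]
  -- per-subset factorization
  have subset_eq : ∀ S : Finset (Fin r),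
      PowerSeries.C (Complex.exp (c * v S)) * expS (v S)
        = ∏ i ∈ S, t i ^ (N i + 1) := by
    intro S
    have h1 : Complex.exp (c * v S) = ∏ i ∈ S, Complex.exp ((a i : ℂ) * c) ^ (N i + 1) := by
      simp_rw [← Complex.exp_nat_mul, ← Complex.exp_sum]
      congr 1
      rw [hv]
      push_cast
      rw [Finset.mul_sum]
      exact Finset.sum_congr rfl fun i _ => by ring
    have h2 : expS (v S) = ∏ i ∈ S, expS (a i) ^ (N i + 1) := by
      have hvS : v S = ∑ i ∈ S, (((N i + 1 : ℕ)) : ℂ) * ((a i : ℕ) : ℂ) := by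
        rw [hv]; push_cast
        exact Finset.sum_congr rfl fun i _ => by ring
      rw [hvS, expS_sum]
      refine Finset.prod_congr rfl fun i _ => ?_
      rw [expS_pow]
    rw [h1, h2, map_prod, ← Finset.prod_mul_distrib]
    exact Finset.prod_congr rfl fun i _ => by rw [ht, mul_pow, map_pow]
  -- F factorizes
  have hFfac : F = expS x * ∏ i, ∑ m ∈ Finset.range (N i + 1), t i ^ m := by
    rw [hF]
    have : ∀ M : (i : Fin r) → Fin (N i + 1),
        PowerSeries.C (Complex.exp (c * w M)) * expS (w M + x)
          = expS x * ∏ i, t i ^ (M i : ℕ) := by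
      intro M
      rw [expS_add, ← term_eq M]
      ring
    rw [Finset.sum_congr rfl fun M _ => this M, ← Finset.mul_sum]
    congr 1
    have hps : ∀ i : Fin r, ∑ m ∈ Finset.range (N i + 1), t i ^ m
        = ∑ j : Fin (N i + 1), t i ^ (j : ℕ) := by
      intro i
      exact (Fin.sum_univ_eq_sum_range (fun m => t i ^ m) (N i + 1)).symm
    rw [Finset.prod_congr rfl fun i _ => hps i, Finset.prod_univ_sum]
    rw [Fintype.piFinset_univ]
  -- the geometric telescoping
  have hPF : P * F = expS x * ∏ i, (1 - t i ^ (N i + 1)) := by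
    rw [hFfac, hP, mul_left_comm, ← Finset.prod_mul_distrib]
    congr 1
    exact Finset.prod_congr rfl fun i _ => geomPS (t i) (N i)
  -- P * G via the generating function
  have hPG : P * G = PowerSeries.C ((2 : ℂ) ^ r) *
      (expS x * ∏ i, (1 - t i ^ (N i + 1))) := by
    rw [hG, Finset.mul_sum]
    have step : ∀ S : Finset (Fin r),
        P * (PowerSeries.C ((-1 : ℂ) ^ S.card * Complex.exp (c * v S)) *
          PowerSeries.mk (fun m => E m (v S + x) / m.factorial))
        = PowerSeries.C ((2 : ℂ) ^ r) *
            (PowerSeries.C ((-1 : ℂ) ^ S.card) * (∏ i ∈ S, t i ^ (N i + 1)) * expS x) := by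
      intro S
      have hE' := hE (v S + x)
      rw [Fintype.card_fin] at hE'
      calc P * (PowerSeries.C ((-1 : ℂ) ^ S.card * Complex.exp (c * v S)) *
            PowerSeries.mk (fun m => E m (v S + x) / m.factorial))
          = PowerSeries.C ((-1 : ℂ) ^ S.card * Complex.exp (c * v S)) *
              (P * PowerSeries.mk (fun m => E m (v S + x) / m.factorial)) := by ring
        _ = PowerSeries.C ((-1 : ℂ) ^ S.card * Complex.exp (c * v S)) *
              (PowerSeries.C ((2 : ℂ) ^ r) * expS (v S + x)) := by rw [hP, ← hE']
        _ = PowerSeries.C ((2 : ℂ) ^ r) * (PowerSeries.C ((-1 : ℂ) ^ S.card) *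
              (PowerSeries.C (Complex.exp (c * v S)) * expS (v S)) * expS x) := by
            rw [expS_add, map_mul]; ring
        _ = PowerSeries.C ((2 : ℂ) ^ r) *
            (PowerSeries.C ((-1 : ℂ) ^ S.card) * (∏ i ∈ S, t i ^ (N i + 1)) * expS x) := by
            rw [subset_eq S]
    rw [Finset.sum_congr rfl fun S _ => step S, ← Finset.mul_sum]
    congr 1
    rw [mul_comm (expS x)]
    rw [← Finset.sum_mul]
    congr 1
    have hCneg : ∀ T : Finset (Fin r), PowerSeries.C ((-1 : ℂ) ^ T.card)
        = (-1 : PowerSeries ℂ) ^ T.card := by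
      intro T; rw [map_pow, map_neg, map_one]
    rw [Finset.sum_congr rfl fun T _ => by rw [hCneg T]]
    exact (prod_one_sub (fun i => t i ^ (N i + 1))).symm
  -- cancel P
  have hPne : P ≠ 0 := by
    intro h0
    have hcc : PowerSeries.constantCoeff P = 0 := by rw [h0]; simp
    rw [hP, map_prod] at hcc
    obtain ⟨l, -, hl⟩ := Finset.prod_eq_zero_iff.mp hcc
    rw [ht] at hl
    simp only [map_sub, map_one, map_mul, PowerSeries.constantCoeff_C,
      constCoeff_expS, mul_one] at hl
    exact hc1 l (by linear_combination -hl)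
  have hkey : PowerSeries.C ((2 : ℂ) ^ r) * F = G := by
    apply mul_left_cancel₀ hPne
    rw [mul_left_comm, hPF, hPG]
  -- extract the coefficient of z^s
  have hfac : ((s.factorial : ℂ)) ≠ 0 := by
    exact_mod_cast Nat.cast_ne_zero.mpr s.factorial_ne_zero
  have h2r : ((2 : ℂ) ^ r) ≠ 0 := pow_ne_zero _ two_ne_zero
  have hco := congrArg (fun f => PowerSeries.coeff s f) hkey
  simp only [map_mul, PowerSeries.coeff_C_mul, map_sum] at hco
  have hcoF : PowerSeries.coeff s F
      = ∑ M : (i : Fin r) → Fin (N i + 1),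
          Complex.exp (c * w M) * ((w M + x) ^ s / s.factorial) := by
    rw [hF, map_sum]
    exact Finset.sum_congr rfl fun M _ => by
      rw [PowerSeries.coeff_C_mul, coeff_expS]
  have hcoG : PowerSeries.coeff s G
      = ∑ S : Finset (Fin r),
          ((-1 : ℂ) ^ S.card * Complex.exp (c * v S)) * (E s (v S + x) / s.factorial) := by
    rw [hG, map_sum]
    exact Finset.sum_congr rfl fun S _ => by
      rw [PowerSeries.coeff_C_mul, PowerSeries.coeff_mk]
  rw [hcoF, hcoG] at hco
  have lhs_eq : (∑ M : (i : Fin r) → Fin (N i + 1),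
        (w M + (x : ℂ)) ^ s * Complex.exp (c * w M))
      = (s.factorial : ℂ) * ∑ M : (i : Fin r) → Fin (N i + 1),
          Complex.exp (c * w M) * ((w M + x) ^ s / s.factorial) := by
    rw [Finset.mul_sum]
    exact Finset.sum_congr rfl fun M _ => by field_simp <;> ring
  have rhs_eq : (∑ S : Finset (Fin r), (-1 : ℂ) ^ S.card * Complex.exp (c * v S)
          * E s (v S + x))
      = (s.factorial : ℂ) * ∑ S : Finset (Fin r),
          ((-1 : ℂ) ^ S.card * Complex.exp (c * v S)) * (E s (v S + x) / s.factorial) := by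
    rw [Finset.mul_sum]
    exact Finset.sum_congr rfl fun S _ => by field_simp <;> ring
  rw [lhs_eq, rhs_eq, ← hco]
  field_simp
end

section
/- Let r ≥ 1 be an integer, A_r = (a_1,…,a_r) ∈ ℤ_{>0}^r, x ∈ ℤ_{≥0}, m ∈ ℤ_{>0}, and let c ∈ ℂ be purely imaginary with e^{a_l c} ≠ 1 for every l. Then ∑_{S ⊆ {1,…,r}} (−1)^{|S|} e^{c(A_S·1_{|S|})} E_m(A_S·1_{|S|} + x, c; A_r) = 2^r x^m. -/
open scoped BigOperators
set_option maxRecDepth 2000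

lemma prod_neg' {R : Type*} [CommRing R] {ι : Type*} [DecidableEq ι] (S : Finset ι) (f : ι → R) :
    ∏ i ∈ S, -f i = (-1 : R) ^ S.card * ∏ i ∈ S, f i := by
  induction S using Finset.induction with
  | empty => simp
  | insert _ _ h ih =>
    rw [Finset.prod_insert h, Finset.prod_insert h, ih, Finset.card_insert_of_notMem h,
      pow_succ]
    ring

theorem statement2_aux (r : ℕ) (hr : 1 ≤ r) (a : Fin r → ℕ) (ha : ∀ l, 0 < a l)
    (x : ℕ) (m : ℕ) (hm : 0 < m)
    (c : ℂ) (hc : c.re = 0) (hc1 : ∀ l, Complex.exp ((a l : ℂ) * c) ≠ 1)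
    (E : ℕ → ℂ → ℂ) (hE : ∀ x : ℂ,
    PowerSeries.C ((2 : ℂ) ^ r) * expS x =
      (∏ l : Fin r, (1 - PowerSeries.C (Complex.exp ((a l : ℂ) * c)) * expS (a l))) *
        PowerSeries.mk (fun m => E m x / m.factorial)) :
    (∑ S : Finset (Fin r),
        (-1 : ℂ) ^ S.card *
          Complex.exp (c * ((∑ i ∈ S, a i : ℕ) : ℂ)) *
          E m (((∑ i ∈ S, a i : ℕ) : ℂ) + (x : ℂ))) =
      (2 : ℂ) ^ r * (x : ℂ) ^ m := by
  classical
  set P : PowerSeries ℂ :=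
    ∏ l : Fin r, (1 - PowerSeries.C (Complex.exp ((a l : ℂ) * c)) * expS (a l)) with hP
  -- α S : the scalar coefficient
  set α : Finset (Fin r) → ℂ := fun S =>
    (-1 : ℂ) ^ S.card * Complex.exp (c * ((∑ i ∈ S, a i : ℕ) : ℂ)) with hα
  have hprodS : ∀ S : Finset (Fin r),
      (∏ i ∈ S, (PowerSeries.C (Complex.exp ((a i : ℂ) * c)) * expS (a i))) =
        PowerSeries.C (Complex.exp (c * ((∑ i ∈ S, a i : ℕ) : ℂ))) *
          expS ((∑ i ∈ S, a i : ℕ) : ℂ) := by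
    intro S
    rw [Finset.prod_mul_distrib, ← map_prod, ← Complex.exp_sum, ← expS_sum]
    congr 2
    · rw [← Finset.sum_mul, mul_comm]
      push_cast
      ring
    · push_cast
      ring
  -- key identity: ∑ S, C (α S) * expS (n_S) = P
  have hkey : (∑ S : Finset (Fin r),
      PowerSeries.C (α S) * expS ((∑ i ∈ S, a i : ℕ) : ℂ)) = P := by
    have := Fintype.prod_add
      (fun l : Fin r => -(PowerSeries.C (Complex.exp ((a l : ℂ) * c)) * expS (a l)))
      (fun _ => (1 : PowerSeries ℂ))
    rw [hP]
    calc (∑ S : Finset (Fin r),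
        PowerSeries.C (α S) * expS ((∑ i ∈ S, a i : ℕ) : ℂ))
        = ∑ S : Finset (Fin r),
            (∏ i ∈ S, -(PowerSeries.C (Complex.exp ((a i : ℂ) * c)) * expS (a i))) *
              ∏ i ∈ Sᶜ, (1 : PowerSeries ℂ) := by
          refine Finset.sum_congr rfl fun S _ => ?_
          rw [Finset.prod_const_one, mul_one]
          have hneg : (∏ i ∈ S, -(PowerSeries.C (Complex.exp ((a i : ℂ) * c)) * expS (a i)))
              = (-1 : PowerSeries ℂ) ^ S.card *
                ∏ i ∈ S, (PowerSeries.C (Complex.exp ((a i : ℂ) * c)) * expS (a i)) := by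
            exact prod_neg' S _
          rw [hneg, hprodS S, hα]
          simp only [map_mul, map_pow, map_neg, map_one]
          ring
      _ = ∏ l : Fin r,
            (-(PowerSeries.C (Complex.exp ((a l : ℂ) * c)) * expS (a l)) + 1) := this.symm
      _ = _ := by
          refine Finset.prod_congr rfl fun l _ => ?_
          ring
  -- P is nonzero
  have hPne : P ≠ 0 := by
    intro h0
    have : PowerSeries.constantCoeff P = 0 := by rw [h0]; simp
    rw [hP, map_prod] at this
    obtain ⟨l, _, hl⟩ := Finset.prod_eq_zero_iff.mp this
    apply hc1 l
    have hec : PowerSeries.constantCoeff (expS ((a l : ℂ))) = 1 := by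
      simp [expS, PowerSeries.coeff_mk, ← PowerSeries.coeff_zero_eq_constantCoeff]
    rw [map_sub, map_one, map_mul, PowerSeries.constantCoeff_C, hec, mul_one,
      sub_eq_zero] at hl
    exact hl.symm
  -- main series identity
  have hmain : (∑ S : Finset (Fin r),
      PowerSeries.C (α S) *
        PowerSeries.mk (fun m => E m (((∑ i ∈ S, a i : ℕ) : ℂ) + (x : ℂ)) / m.factorial)) =
      PowerSeries.C ((2 : ℂ) ^ r) * expS (x : ℂ) := by
    apply mul_left_cancel₀ hPne
    rw [Finset.mul_sum]
    calc (∑ S : Finset (Fin r),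
        P * (PowerSeries.C (α S) *
          PowerSeries.mk (fun m => E m (((∑ i ∈ S, a i : ℕ) : ℂ) + (x : ℂ)) / m.factorial)))
        = ∑ S : Finset (Fin r),
            PowerSeries.C (α S) * (PowerSeries.C ((2 : ℂ) ^ r) *
              expS (((∑ i ∈ S, a i : ℕ) : ℂ) + (x : ℂ))) := by
          refine Finset.sum_congr rfl fun S _ => ?_
          rw [hE (((∑ i ∈ S, a i : ℕ) : ℂ) + (x : ℂ))]
          ring
      _ = PowerSeries.C ((2 : ℂ) ^ r) *
            ((∑ S : Finset (Fin r),
              PowerSeries.C (α S) * expS ((∑ i ∈ S, a i : ℕ) : ℂ)) * expS (x : ℂ)) := by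
          rw [Finset.sum_mul, Finset.mul_sum]
          refine Finset.sum_congr rfl fun S _ => ?_
          rw [expS_add]
          ring
      _ = P * (PowerSeries.C ((2 : ℂ) ^ r) * expS (x : ℂ)) := by rw [hkey]; ring
  -- extract coefficient m
  have hcoeff := congrArg (PowerSeries.coeff m) hmain
  rw [map_sum] at hcoeff
  simp only [PowerSeries.coeff_C_mul, PowerSeries.coeff_mk, expS] at hcoeff
  have hfac : ((m.factorial : ℂ)) ≠ 0 := by
    exact_mod_cast Nat.factorial_ne_zero m
  have := congrArg (fun z => z * (m.factorial : ℂ)) hcoeff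
  rw [Finset.sum_mul] at this
  calc (∑ S : Finset (Fin r),
      (-1 : ℂ) ^ S.card * Complex.exp (c * ((∑ i ∈ S, a i : ℕ) : ℂ)) *
        E m (((∑ i ∈ S, a i : ℕ) : ℂ) + (x : ℂ)))
      = ∑ S : Finset (Fin r),
          α S * (E m (((∑ i ∈ S, a i : ℕ) : ℂ) + (x : ℂ)) / m.factorial) *
            (m.factorial : ℂ) := by
        refine Finset.sum_congr rfl fun S _ => ?_
        field_simp [hα]
        rw [hα]; ring
    _ = (2 : ℂ) ^ r * ((x : ℂ) ^ m / m.factorial) * (m.factorial : ℂ) := this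
    _ = (2 : ℂ) ^ r * (x : ℂ) ^ m := by field_simp


/-- Corollary: setting `N_r = 0_r`,
`∑_{S ⊆ {1,…,r}} (−1)^{|S|} e^{c(A_S·1_{|S|})} E_m(A_S·1_{|S|} + x, c; A_r) = 2^r x^m`. -/
theorem statement2 (r : ℕ) (hr : 1 ≤ r) (a : Fin r → ℕ) (ha : ∀ l, 0 < a l)
    (x : ℕ) (m : ℕ) (hm : 0 < m)
    (c : ℂ) (hc : c.re = 0) (hc1 : ∀ l, Complex.exp ((a l : ℂ) * c) ≠ 1)
    (E : ℕ → ℂ → ℂ) (hE : IsGenEulerPoly a c E) :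
    (∑ S : Finset (Fin r),
        (-1 : ℂ) ^ S.card *
          Complex.exp (c * ((∑ i ∈ S, a i : ℕ) : ℂ)) *
          E m (((∑ i ∈ S, a i : ℕ) : ℂ) + (x : ℂ))) =
      (2 : ℂ) ^ r * (x : ℂ) ^ m := by
  refine statement2_aux r hr a ha x m hm c hc hc1 E ?_
  have h := hE
  rw [IsGenEulerPoly] at h
  simpa [Fintype.card_fin] using h
end

section
/- Let r ≥ 1 be an integer, A_r = (a_1,…,a_r) ∈ ℤ_{>0}^r, c > 0 a real number, θ ∈ ℝ with a_p θ ∉ 2πℤ for every p, and s ∈ ℂ with Re(s) > r. Then the series ∑_{M_r ∈ ℤ_{≥0}^r} e^{iθ(A_r·M_r)} (A_r·M_r + c)^{−s} converges absolutely, the integral ∫_0^∞ e^{−ct} t^{s−1} ∏_{p=1}^r (1 − e^{a_p(iθ − t)})^{−1} dt converges absolutely, and Γ(s) · ∑_{M_r ∈ ℤ_{≥0}^r} e^{iθ(A_r·M_r)} (A_r·M_r + c)^{−s} = ∫_0^∞ e^{−ct} t^{s−1} ∏_{p=1}^r (1 − e^{a_p(iθ − t)})^{−1} dt. -/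
set_option maxHeartbeats 1000000
open scoped BigOperators
open MeasureTheory Set Real Complex

lemma pi_prod_summable_hasSum {𝕜 : Type*} [NormedField 𝕜] [CompleteSpace 𝕜]
    {r : ℕ} (f : Fin r → ℕ → 𝕜) (hf : ∀ p, Summable fun n => ‖f p n‖) :
    Summable (fun M : Fin r → ℕ => ‖∏ p, f p (M p)‖) ∧
    HasSum (fun M : Fin r → ℕ => ∏ p, f p (M p)) (∏ p, ∑' n, f p n) := by
  induction r with
  | zero =>
      constructor
      · simp only [Finset.univ_eq_empty, Finset.prod_empty]
        have := hasSum_single (f := fun _ : Fin 0 → ℕ => ‖(1:𝕜)‖) default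
          (fun b hb => absurd (Subsingleton.elim b default) hb)
        exact this.summable
      · simp only [Finset.univ_eq_empty, Finset.prod_empty]
        have := hasSum_single (f := fun _ : Fin 0 → ℕ => (1:𝕜)) default
          (fun b hb => absurd (Subsingleton.elim b default) hb)
        simpa using this
  | succ n ih =>
      obtain ⟨ihS, ihH⟩ := ih (fun p => f p.succ) (fun p => hf p.succ)
      set e := (Fin.consEquiv (fun _ : Fin (n+1) => ℕ)).symm with he
      have key : ∀ x : ℕ × (Fin n → ℕ),
          (∏ p, f p (e.symm x p)) = f 0 x.1 * ∏ p : Fin n, f p.succ (x.2 p) := by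
        intro x
        rw [Fin.prod_univ_succ]
        simp [he, Fin.consEquiv]
      have hmulnorm : Summable fun x : ℕ × (Fin n → ℕ) =>
          ‖f 0 x.1 * ∏ p : Fin n, f p.succ (x.2 p)‖ :=
        Summable.mul_norm (R := 𝕜) (f := f 0)
          (g := fun M : Fin n → ℕ => ∏ p : Fin n, f p.succ (M p)) (hf 0) ihS
      constructor
      · refine e.symm.summable_iff.mp ?_
        refine hmulnorm.congr fun x => ?_
        exact (congrArg norm (key x)).symm
      · have h2 : HasSum (f 0) (∑' m, f 0 m) := (hf 0).of_norm.hasSum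
        have hH : HasSum (fun x : ℕ × (Fin n → ℕ) => f 0 x.1 * ∏ p : Fin n, f p.succ (x.2 p))
            ((∑' m, f 0 m) * ∏ p : Fin n, ∑' m, f p.succ m) := by
          obtain ⟨u, hu⟩ := hmulnorm.of_norm
          have := HasSum.mul_eq h2 ihH hu
          rwa [this]
        rw [Fin.prod_univ_succ]
        refine e.symm.hasSum_iff.mp ?_
        refine hH.congr_fun fun x => key x

lemma summable_nat_shift_rpow {c' : ℝ} (hc' : 0 ≤ c') {q : ℝ} (hq : 1 < q) :
    Summable fun n : ℕ => ((n : ℝ) + c') ^ (-q) := by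
  rw [← summable_nat_add_iff 1]
  have hbase : Summable fun n : ℕ => ((n : ℝ) + 1) ^ (-q) := by
    have := Real.summable_nat_rpow (p := -q).mpr (by linarith)
    rw [← summable_nat_add_iff 1] at this
    refine this.congr fun n => by push_cast; ring_nf
  refine hbase.of_nonneg_of_le (fun n => Real.rpow_nonneg (by positivity) _) (fun n => ?_)
  refine Real.rpow_le_rpow_of_nonpos (by positivity) (by push_cast; linarith) (by linarith)

lemma summable_main {r : ℕ} (hr : 1 ≤ r) (a : Fin r → ℕ) (ha : ∀ p, 0 < a p)
    {c : ℝ} (hc : 0 < c) {σ : ℝ} (hσ : (r : ℝ) < σ) :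
    Summable fun M : Fin r → ℕ => (((∑ i, a i * M i : ℕ) : ℝ) + c) ^ (-σ) := by
  have hr0 : (0 : ℝ) < r := by exact_mod_cast hr
  set q : ℝ := σ / r with hqdef
  have hq : 1 < q := (one_lt_div hr0).mpr hσ
  set c' : ℝ := c / r with hc'def
  have hc'0 : 0 < c' := by positivity
  -- dominating product function
  have hdom : Summable fun M : Fin r → ℕ => ∏ p, (((M p : ℝ) + c') ^ (-q)) := by
    have h := (pi_prod_summable_hasSum (𝕜 := ℝ) (r := r)
      (fun _ n => ((n : ℝ) + c') ^ (-q))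
      (fun p => by
        refine (summable_nat_shift_rpow hc'0.le hq).congr fun n => ?_
        rw [Real.norm_of_nonneg (Real.rpow_nonneg (by positivity) _)])).1
    refine h.congr fun M => ?_
    rw [Real.norm_of_nonneg (Finset.prod_nonneg fun p _ => Real.rpow_nonneg (by positivity) _)]
  refine hdom.of_nonneg_of_le (fun M => Real.rpow_nonneg (by positivity) _) (fun M => ?_)
  set N : ℝ := ((∑ i, a i * M i : ℕ) : ℝ) with hN
  have hN0 : 0 ≤ N := by positivity
  have hxle : ∀ p, (M p : ℝ) + c' ≤ N + c := by
    intro p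
    have h1 : M p ≤ ∑ i, a i * M i := by
      calc M p ≤ a p * M p := Nat.le_mul_of_pos_left _ (ha p)
        _ ≤ ∑ i, a i * M i :=
          Finset.single_le_sum (f := fun i => a i * M i) (fun i _ => Nat.zero_le _)
            (Finset.mem_univ p)
    have h2 : c' ≤ c := by
      rw [hc'def]
      exact div_le_self hc.le (by exact_mod_cast hr)
    have := (Nat.cast_le (α := ℝ)).mpr h1
    simp only [hN]
    linarith
  have hprodle : ∏ p, ((M p : ℝ) + c') ≤ (N + c) ^ r := by
    calc ∏ p, ((M p : ℝ) + c') ≤ ∏ _p : Fin r, (N + c) :=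
          Finset.prod_le_prod (fun p _ => by positivity) (fun p _ => hxle p)
      _ = (N + c) ^ r := by rw [Finset.prod_const, Finset.card_univ, Fintype.card_fin]
  have hpow : (∏ p, ((M p : ℝ) + c')) ^ q ≤ (N + c) ^ σ := by
    calc (∏ p, ((M p : ℝ) + c')) ^ q ≤ ((N + c) ^ r) ^ q :=
          Real.rpow_le_rpow (Finset.prod_nonneg fun p _ => by positivity) hprodle
            (by positivity)
      _ = (N + c) ^ σ := by
          rw [← Real.rpow_natCast (N + c) r, ← Real.rpow_mul (by positivity)]
          congr 1
          rw [hqdef]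
          field_simp
  calc (N + c) ^ (-σ) = ((N + c) ^ σ)⁻¹ := by rw [Real.rpow_neg (by positivity)]
    _ ≤ ((∏ p, ((M p : ℝ) + c')) ^ q)⁻¹ := by
        apply inv_anti₀ _ hpow
        exact Real.rpow_pos_of_pos (Finset.prod_pos fun p _ => by positivity) _
    _ = (∏ p, ((M p : ℝ) + c')) ^ (-q) := by
        rw [Real.rpow_neg (Finset.prod_nonneg fun p _ => by positivity)]
    _ = ∏ p, (((M p : ℝ) + c') ^ (-q)) := by
        rw [← Real.finset_prod_rpow _ _ (fun p _ => by positivity)]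

lemma ennnorm_tsum_le' {ι : Type*} [Countable ι] {f : ι → ℂ} :
    (‖∑' i, f i‖₊ : ENNReal) ≤ ∑' i, (‖f i‖₊ : ENNReal) := by
  by_cases h : Summable fun i => ‖f i‖₊
  · rw [← ENNReal.coe_tsum h]
    exact_mod_cast nnnorm_tsum_le h
  · have : ∑' i, (‖f i‖₊ : ENNReal) = ⊤ := by
      by_contra hne
      exact h (ENNReal.tsum_coe_ne_top_iff_summable.mp hne)
    simp [this]

/-- Lemma 1 (integral representation): for `Re(s) > r`, `c > 0` and `a_pθ ∉ 2πℤ`,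
the multi-series `∑_{M_r} e^{iθ(A_r·M_r)} (A_r·M_r + c)^{−s}` converges absolutely,
the integral `∫_0^∞ e^{−ct} t^{s−1} ∏_p (1 − e^{a_p(iθ−t)})^{−1} dt` converges absolutely, and
`Γ(s) · ∑_{M_r} e^{iθ(A_r·M_r)} (A_r·M_r + c)^{−s} = ∫_0^∞ e^{−ct} t^{s−1} ∏_p (1 − e^{a_p(iθ−t)})^{−1} dt`. -/
theorem statement8 (r : ℕ) (hr : 1 ≤ r) (a : Fin r → ℕ) (ha : ∀ p, 0 < a p)
    (c : ℝ) (hc : 0 < c) (θ : ℝ) (hθ : ∀ p, ∀ n : ℤ, (a p : ℝ) * θ ≠ 2 * Real.pi * n)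
    (s : ℂ) (hs : (r : ℝ) < s.re) :
    Summable (fun M : Fin r → ℕ =>
        ‖Complex.exp ((θ : ℂ) * Complex.I * ((∑ i, a i * M i : ℕ) : ℂ)) *
            (((∑ i, a i * M i : ℕ) : ℂ) + (c : ℂ)) ^ (-s)‖) ∧
    MeasureTheory.IntegrableOn
        (fun t : ℝ =>
          Complex.exp (-(c : ℂ) * (t : ℂ)) * (t : ℂ) ^ (s - 1) *
            ∏ p, (1 - Complex.exp ((a p : ℂ) * ((θ : ℂ) * Complex.I - (t : ℂ))))⁻¹)
        (Set.Ioi (0 : ℝ)) ∧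
    Complex.Gamma s *
        ∑' M : Fin r → ℕ,
          Complex.exp ((θ : ℂ) * Complex.I * ((∑ i, a i * M i : ℕ) : ℂ)) *
            (((∑ i, a i * M i : ℕ) : ℂ) + (c : ℂ)) ^ (-s) =
      ∫ t in Set.Ioi (0 : ℝ),
        Complex.exp (-(c : ℂ) * (t : ℂ)) * (t : ℂ) ^ (s - 1) *
          ∏ p, (1 - Complex.exp ((a p : ℂ) * ((θ : ℂ) * Complex.I - (t : ℂ))))⁻¹ := by
  have hr0 : (0 : ℝ) < r := by exact_mod_cast hr
  have hs0 : 0 < s.re := lt_of_le_of_lt hr0.le hs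
  -- notation
  set N : (Fin r → ℕ) → ℕ := fun M => ∑ i, a i * M i with hNdef
  set P : (Fin r → ℕ) → ℝ := fun M => (N M : ℝ) + c with hPdef
  have hP0 : ∀ M, 0 < P M := fun M => by positivity
  set A : (Fin r → ℕ) → ℂ := fun M => Complex.exp ((θ : ℂ) * Complex.I * (N M : ℂ)) with hAdef
  have hA1 : ∀ M, ‖A M‖ = 1 := by
    intro M
    rw [Complex.norm_exp]
    norm_num [Complex.mul_re]
  have hcast : ∀ M, ((P M : ℝ) : ℂ) = ((N M : ℕ) : ℂ) + (c : ℂ) := fun M => by simp [hPdef]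
  have hterm_norm : ∀ M : Fin r → ℕ,
      ‖A M * (((N M : ℕ) : ℂ) + (c : ℂ)) ^ (-s)‖ = (P M) ^ (-s.re) := by
    intro M
    rw [norm_mul, hA1, one_mul, ← hcast,
      Complex.norm_cpow_eq_rpow_re_of_pos (hP0 M), Complex.neg_re]
  have hsum : Summable fun M : Fin r → ℕ => (P M) ^ (-s.re) :=
    summable_main hr a ha hc hs
  -- the geometric factors
  set z : Fin r → ℝ → ℂ := fun p t => Complex.exp ((a p : ℂ) * ((θ : ℂ) * Complex.I - (t : ℂ)))
    with hzdef
  have hz_norm : ∀ p, ∀ t : ℝ, ‖z p t‖ = Real.exp (-(a p * t)) := by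
    intro p t
    rw [hzdef]
    rw [Complex.norm_exp]
    norm_num [Complex.mul_re, Complex.sub_re, Complex.sub_im, Complex.mul_im]
  have hz_lt : ∀ p, ∀ t : ℝ, 0 < t → ‖z p t‖ < 1 := by
    intro p t ht
    rw [hz_norm]
    refine Real.exp_lt_one_iff.mpr ?_
    have : (0:ℝ) < a p := by exact_mod_cast ha p
    nlinarith
  have hz_ne : ∀ p, ∀ t : ℝ, 0 < t → (1 : ℂ) - z p t ≠ 0 := by
    intro p t ht
    refine sub_ne_zero_of_ne (fun h => ?_)
    have := hz_lt p t ht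
    rw [← h] at this
    simp at this
  set F : ℝ → ℂ := fun t => Complex.exp (-(c : ℂ) * (t : ℂ)) * ∏ p, (1 - z p t)⁻¹ with hFdef
  -- key HasSum for each t > 0
  have hF : ∀ t ∈ Set.Ioi (0:ℝ),
      HasSum (fun M : Fin r → ℕ => A M * (Real.exp (-(P M) * t) : ℂ)) (F t) := by
    intro t ht
    have ht' : 0 < t := ht
    have hznorm_summable : ∀ p, Summable fun n : ℕ => ‖(z p t) ^ n‖ := by
      intro p
      refine (summable_geometric_of_lt_one (norm_nonneg _) (hz_lt p t ht')).congr fun n => ?_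
      rw [norm_pow]
    obtain ⟨hS, hH⟩ := pi_prod_summable_hasSum (𝕜 := ℂ) (r := r) (fun p n => (z p t) ^ n)
      hznorm_summable
    have hH' : HasSum (fun M : Fin r → ℕ => ∏ p, (z p t) ^ (M p)) (∏ p, (1 - z p t)⁻¹) := by
      have : ∀ p : Fin r, ∑' n : ℕ, (z p t) ^ n = (1 - z p t)⁻¹ := fun p =>
        tsum_geometric_of_norm_lt_one (hz_lt p t ht')
      rwa [Finset.prod_congr rfl (fun p _ => this p)] at hH
    refine (hH'.mul_left (Complex.exp (-(c : ℂ) * (t : ℂ)))).congr_fun fun M => ?_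
    -- term equality
    have h1 : ∀ p : Fin r, (z p t) ^ (M p)
        = Complex.exp ((M p : ℂ) * ((a p : ℂ) * ((θ : ℂ) * Complex.I - (t : ℂ)))) := by
      intro p
      rw [Complex.exp_nat_mul]
    rw [Finset.prod_congr rfl (fun p _ => h1 p), ← Complex.exp_sum, ← Complex.exp_add,
      hAdef]
    rw [show ((Real.exp (-(P M) * t) : ℝ) : ℂ) = Complex.exp ((-(P M) * t : ℝ) : ℂ) by
      rw [Complex.ofReal_exp], ← Complex.exp_add]
    congr 1
    have key : ∑ p, (M p : ℂ) * ((a p : ℂ) * ((θ : ℂ) * Complex.I - (t : ℂ)))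
        = ((N M : ℕ) : ℂ) * ((θ : ℂ) * Complex.I - (t : ℂ)) := by
      simp only [hNdef]
      push_cast
      rw [Finset.sum_mul]
      exact Finset.sum_congr rfl fun i _ => by ring
    rw [key]
    simp only [hPdef]
    push_cast
    ring
  -- summability bullet
  have bullet1 : Summable (fun M : Fin r → ℕ =>
      ‖Complex.exp ((θ : ℂ) * Complex.I * ((∑ i, a i * M i : ℕ) : ℂ)) *
          (((∑ i, a i * M i : ℕ) : ℂ) + (c : ℂ)) ^ (-s)‖) := by
    refine hsum.congr fun M => ?_
    exact (hterm_norm M).symm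
  -- per-term integrand functions
  set f : (Fin r → ℕ) → ℝ → ℂ :=
    fun M t => A M * (Real.exp (-(P M) * t) : ℂ) * (t : ℂ) ^ (s - 1) with hfdef
  have hfcont : ∀ M, ContinuousOn (f M) (Set.Ioi 0) := by
    intro M
    refine ContinuousOn.mul (Continuous.continuousOn ?_) ?_
    · exact continuous_const.mul (Complex.continuous_ofReal.comp
        (Real.continuous_exp.comp (continuous_const.mul continuous_id)))
    · exact continuousOn_of_forall_continuousAt fun t ht =>
        Complex.continuousAt_ofReal_cpow_const t (s - 1) (Or.inr (ne_of_gt ht))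
  have hfmeas : ∀ M, MeasureTheory.AEStronglyMeasurable (f M)
      (MeasureTheory.volume.restrict (Set.Ioi 0)) :=
    fun M => (hfcont M).aestronglyMeasurable measurableSet_Ioi
  have hfnorm : ∀ M, ∀ t : ℝ, 0 < t →
      ‖f M t‖ = Real.exp (-(P M) * t) * t ^ (s.re - 1) := by
    intro M t ht
    simp only [hfdef]
    rw [norm_mul, norm_mul, hA1, one_mul, Complex.norm_real, Real.norm_eq_abs,
      Real.abs_exp, Complex.norm_cpow_eq_rpow_re_of_pos ht,
      Complex.sub_re, Complex.one_re]
  have hrealint : ∀ M, MeasureTheory.IntegrableOn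
      (fun t : ℝ => Real.exp (-(P M) * t) * t ^ (s.re - 1)) (Set.Ioi 0) := by
    intro M
    have h := Real.GammaIntegral_convergent hs0
    rw [← mul_zero (P M), ← MeasureTheory.integrableOn_Ioi_comp_mul_left_iff _ _ (hP0 M)] at h
    refine MeasureTheory.IntegrableOn.congr_fun (h.const_mul (((P M) ^ (s.re - 1))⁻¹))
      (fun t ht => ?_) measurableSet_Ioi
    have ht' : (0:ℝ) < t := ht
    rw [Real.mul_rpow (hP0 M).le ht'.le]
    have hPpow : (P M) ^ (s.re - 1) ≠ 0 := (Real.rpow_pos_of_pos (hP0 M) _).ne'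
    rw [neg_mul]
    field_simp
  have hfint : ∀ M, MeasureTheory.IntegrableOn (f M) (Set.Ioi 0) := by
    intro M
    refine MeasureTheory.Integrable.mono' (hrealint M) (hfmeas M) ?_
    refine (MeasureTheory.ae_restrict_iff' measurableSet_Ioi).mpr
      (Filter.Eventually.of_forall fun t ht => ?_)
    rw [hfnorm M t ht]
  have h_eq : ∀ t ∈ Set.Ioi (0:ℝ),
      Complex.exp (-(c : ℂ) * (t : ℂ)) * (t : ℂ) ^ (s - 1) *
          ∏ p, (1 - Complex.exp ((a p : ℂ) * ((θ : ℂ) * Complex.I - (t : ℂ))))⁻¹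
        = ∑' M : Fin r → ℕ, f M t := by
    intro t ht
    have h1 := (hF t ht).tsum_eq
    calc Complex.exp (-(c : ℂ) * (t : ℂ)) * (t : ℂ) ^ (s - 1) *
          ∏ p, (1 - Complex.exp ((a p : ℂ) * ((θ : ℂ) * Complex.I - (t : ℂ))))⁻¹
        = F t * (t : ℂ) ^ (s - 1) := by simp only [hFdef, hzdef]; ring
      _ = (∑' M : Fin r → ℕ, A M * (Real.exp (-(P M) * t) : ℂ)) * (t : ℂ) ^ (s - 1) := by
          rw [h1]
      _ = ∑' M : Fin r → ℕ, f M t := by rw [tsum_mul_right]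
  have hsummain : Summable fun M : Fin r → ℕ => (1 / P M) ^ s.re * Real.Gamma s.re := by
    refine (hsum.mul_right (Real.Gamma s.re)).congr fun M => ?_
    rw [one_div, Real.inv_rpow (hP0 M).le, ← Real.rpow_neg (hP0 M).le]
  have hlint : ∀ M : Fin r → ℕ,
      (∫⁻ t in Set.Ioi (0:ℝ), (‖f M t‖₊ : ENNReal))
        = ENNReal.ofReal ((1 / P M) ^ s.re * Real.Gamma s.re) := by
    intro M
    simp_rw [← enorm_eq_nnnorm, ← ofReal_norm]
    rw [← MeasureTheory.ofReal_integral_eq_lintegral_ofReal (hfint M).norm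
      (Filter.Eventually.of_forall fun t => norm_nonneg _)]
    · congr 1
      calc (∫ t in Set.Ioi (0:ℝ), ‖f M t‖)
          = ∫ t in Set.Ioi (0:ℝ), t ^ (s.re - 1) * Real.exp (-(P M * t)) := by
            refine MeasureTheory.setIntegral_congr_fun measurableSet_Ioi fun t ht => ?_
            rw [hfnorm M t ht, neg_mul, mul_comm]
        _ = (1 / P M) ^ s.re * Real.Gamma s.re :=
            Real.integral_rpow_mul_exp_neg_mul_Ioi hs0 (hP0 M)
  refine ⟨bullet1, ⟨?_, ?_⟩, ?_⟩
  · -- a.e. strong measurability via continuity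
    refine ContinuousOn.aestronglyMeasurable ?_ measurableSet_Ioi
    refine ContinuousOn.mul (ContinuousOn.mul (Continuous.continuousOn ?_) ?_) ?_
    · exact Complex.continuous_exp.comp (continuous_const.mul Complex.continuous_ofReal)
    · exact continuousOn_of_forall_continuousAt fun t ht =>
        Complex.continuousAt_ofReal_cpow_const t (s - 1) (Or.inr (ne_of_gt ht))
    · refine continuousOn_finset_prod _ fun p _ => ContinuousOn.inv₀ ?_ ?_
      · refine Continuous.continuousOn ?_
        exact continuous_const.sub (Complex.continuous_exp.comp
          (continuous_const.mul (continuous_const.sub Complex.continuous_ofReal)))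
      · exact fun t ht => hz_ne p t ht
  · -- finiteness of the integral of the norm
    rw [MeasureTheory.hasFiniteIntegral_iff_norm]
    calc (∫⁻ t in Set.Ioi (0:ℝ), ENNReal.ofReal
          ‖Complex.exp (-(c : ℂ) * (t : ℂ)) * (t : ℂ) ^ (s - 1) *
            ∏ p, (1 - Complex.exp ((a p : ℂ) * ((θ : ℂ) * Complex.I - (t : ℂ))))⁻¹‖)
        = ∫⁻ t in Set.Ioi (0:ℝ), ENNReal.ofReal ‖∑' M : Fin r → ℕ, f M t‖ := by
          refine MeasureTheory.setLIntegral_congr_fun measurableSet_Ioi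
            (fun t ht => ?_)
          rw [h_eq t ht]
      _ ≤ ∫⁻ t in Set.Ioi (0:ℝ), ∑' M : Fin r → ℕ, (‖f M t‖₊ : ENNReal) := by
          refine MeasureTheory.lintegral_mono fun t => ?_
          rw [ofReal_norm, enorm_eq_nnnorm]
          exact ennnorm_tsum_le'
      _ = ∑' M : Fin r → ℕ, ∫⁻ t in Set.Ioi (0:ℝ), (‖f M t‖₊ : ENNReal) :=
          MeasureTheory.lintegral_tsum fun M => (hfmeas M).enorm
      _ = ∑' M : Fin r → ℕ, ENNReal.ofReal ((1 / P M) ^ s.re * Real.Gamma s.re) := by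
          exact tsum_congr hlint
      _ = ENNReal.ofReal (∑' M : Fin r → ℕ, (1 / P M) ^ s.re * Real.Gamma s.re) :=
          (ENNReal.ofReal_tsum_of_nonneg (fun M => by positivity) hsummain).symm
      _ < ⊤ := ENNReal.ofReal_lt_top
  · -- the main identity
    have hp : ∀ M : Fin r → ℕ, A M = 0 ∨ 0 < P M := fun M => Or.inr (hP0 M)
    have h_sum : Summable fun M : Fin r → ℕ => ‖A M‖ / (P M) ^ s.re := by
      refine hsum.congr fun M => ?_
      rw [hA1, Real.rpow_neg (hP0 M).le, one_div]
    have H := hasSum_mellin hp hs0 hF h_sum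
    rw [← tsum_mul_left]
    have hterm : ∀ M : Fin r → ℕ,
        Complex.Gamma s * (A M * (((N M : ℕ) : ℂ) + (c : ℂ)) ^ (-s))
          = Complex.Gamma s * A M / ((P M : ℝ) : ℂ) ^ s := by
      intro M
      rw [hcast M, Complex.cpow_neg, div_eq_mul_inv, mul_assoc]
    calc (∑' M : Fin r → ℕ, Complex.Gamma s *
            (Complex.exp ((θ : ℂ) * Complex.I * ((∑ i, a i * M i : ℕ) : ℂ)) *
              (((∑ i, a i * M i : ℕ) : ℂ) + (c : ℂ)) ^ (-s)))
        = ∑' M : Fin r → ℕ, Complex.Gamma s * A M / ((P M : ℝ) : ℂ) ^ s :=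
          tsum_congr hterm
      _ = mellin F s := H.tsum_eq
      _ = ∫ t in Set.Ioi (0:ℝ),
            Complex.exp (-(c : ℂ) * (t : ℂ)) * (t : ℂ) ^ (s - 1) *
              ∏ p, (1 - Complex.exp ((a p : ℂ) * ((θ : ℂ) * Complex.I - (t : ℂ))))⁻¹ := by
          rw [show mellin F s = ∫ t in Set.Ioi (0:ℝ), (t : ℂ) ^ (s - 1) • F t from rfl]
          refine MeasureTheory.setIntegral_congr_fun measurableSet_Ioi fun t ht => ?_
          simp only [hFdef, hzdef, smul_eq_mul]
          ring
end
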